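/- arXiv:2104.01748 — 2 statements merged into one kernel-verified Lean document; each statement's English description precedes it below -/
import Mathlib

section
/- Let G ⊂ Ω be the set Ω ∩ B(x_g, (1+2δ_g)R_g), let z ∈ H¹(0,T; L²(G)) ∩ L²(0,T; H²(G) ∩ H₀¹(G)), and for λ > 0 set G_λ(x,t) = (T−t+λ)^{−n/2} exp(−|x−x_g|²/(4(T−t+λ))) and N_λ(t) = (∫_G |∇z(x,t)|² G_λ(x,t) dx) / (∫_G |z(x,t)|² G_λ(x,t) dx). Then for every t ∈ (0,T] and λ > 0 with ∫_G |z(x,t)|² G_λ(x,t) dx ≠ 0, one has (1/2)(d/dt)∫_G |z|² G_λ dx + N_λ(t) ∫_G |z|² G_λ dx = ∫_G z (∂ₜz − Δz) G_λ dx. -/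
open MeasureTheory Set ENNReal

noncomputable section

/-- `n`-dimensional Euclidean space. -/
abbrev Euc (n : ℕ) := EuclideanSpace ℝ (Fin n)

/-- Divergence of a vector field, computed with classical (Fréchet) derivatives. -/
def diverg {n : ℕ} (Φ : Euc n → Euc n) (x : Euc n) : ℝ :=
  ∑ i, fderiv ℝ (fun y => Φ y i) x (EuclideanSpace.single i 1)

/-- Laplacian of a scalar function, as divergence of the gradient. -/
def lapl {n : ℕ} (f : Euc n → ℝ) (x : Euc n) : ℝ :=
  diverg (fun y => gradient f y) x

/-- The backward Gaussian weight
`G_λ(x,t) = (T−t+λ)^{−n/2} exp(−|x−x_g|²/(4(T−t+λ)))`. -/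
def Gweight {n : ℕ} (xg : Euc n) (T lam : ℝ) (x : Euc n) (t : ℝ) : ℝ :=
  (T - t + lam) ^ (-(n:ℝ) / 2) * Real.exp (-‖x - xg‖ ^ 2 / (4 * (T - t + lam)))

/-- The localized frequency function
`N_λ(t) = (∫_G |∇z|² G_λ dx) / (∫_G |z|² G_λ dx)`. -/
def Nfreq {n : ℕ} (G : Set (Euc n)) (xg : Euc n) (T lam : ℝ)
    (z : ℝ → Euc n → ℝ) (t : ℝ) : ℝ :=
  (∫ x in G, ‖gradient (z t) x‖ ^ 2 * Gweight xg T lam x t) /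
    (∫ x in G, (z t x) ^ 2 * Gweight xg T lam x t)

/-!
Differentiating under the integral sign gives `d/dt ∫ z²G = ∫ (2 z ∂ₜz G + z² ∂ₜG)`, and the
Gaussian weight solves the backward heat equation `∂ₜG = -ΔG`. Since `Δ(z²) = 2zΔz + 2|∇z|²`,
the identity is Green's second identity `∫ (G Δ(z²) - z² ΔG) = 0`, which holds because `z²` and
`∇(z²) = 2z∇z` vanish on the boundary. The divergence theorem for fields vanishing on the
boundary of a bounded open set reduces, by Fubini, to lines parallel to the axes; there the slice
of the set is a countable union of open intervals with endpoints on the boundary, and each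
interval contributes zero by the fundamental theorem of calculus.
-/

open Filter Topology Metric

theorem Continuous.integrableOn_of_isBounded {X E : Type*} [MetricSpace X] [ProperSpace X]
    [MeasurableSpace X] [OpensMeasurableSpace X] [NormedAddCommGroup E] {μ : Measure X}
    [IsFiniteMeasureOnCompacts μ] {f : X → E} (hf : Continuous f) {s : Set X}
    (hs : Bornology.IsBounded s) : IntegrableOn f s μ :=
  (hf.continuousOn.integrableOn_compact hs.isCompact_closure).mono_set subset_closure

theorem frontier_connectedComponentIn_subset {X : Type*} [TopologicalSpace X]
    [LocallyConnectedSpace X] {U : Set X} (hU : IsOpen U) (x : X) :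
    frontier (connectedComponentIn U x) ⊆ frontier U := by
  intro y hy
  have hCo : IsOpen (connectedComponentIn U x) := hU.connectedComponentIn
  rw [hCo.frontier_eq] at hy
  refine hU.frontier_eq ▸ ⟨closure_mono (connectedComponentIn_subset U x) hy.1, fun hyU => hy.2 ?_⟩
  obtain ⟨w, hwy, hwx⟩ := mem_closure_iff.1 hy.1 _ hU.connectedComponentIn
    (mem_connectedComponentIn hyU)
  rw [connectedComponentIn_eq hwx, ← connectedComponentIn_eq hwy]
  exact mem_connectedComponentIn hyU

theorem csInf_notMem_of_isOpen {α : Type*} [ConditionallyCompleteLinearOrder α]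
    [TopologicalSpace α] [OrderTopology α] [DenselyOrdered α] [NoMinOrder α] [NoMaxOrder α]
    {s : Set α} (hs : IsOpen s) (hb : BddBelow s) : sInf s ∉ s := fun h => by
  obtain ⟨l, u, ⟨hl, hu⟩, hlu⟩ := mem_nhds_iff_exists_Ioo_subset.1 (hs.mem_nhds h)
  obtain ⟨y, hly, hya⟩ := exists_between hl
  exact (csInf_le hb (hlu ⟨hly, hya.trans hu⟩)).not_gt hya

theorem csSup_notMem_of_isOpen {α : Type*} [ConditionallyCompleteLinearOrder α]
    [TopologicalSpace α] [OrderTopology α] [DenselyOrdered α] [NoMinOrder α] [NoMaxOrder α]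
    {s : Set α} (hs : IsOpen s) (hb : BddAbove s) : sSup s ∉ s :=
  csInf_notMem_of_isOpen (α := αᵒᵈ) hs hb

theorem Real.connectedComponentIn_eq_Ioo {U : Set ℝ} (hU : IsOpen U)
    (hUb : Bornology.IsBounded U) {x : ℝ} (hx : x ∈ U) :
    ∃ a b, a ∈ frontier U ∧ b ∈ frontier U ∧ connectedComponentIn U x = Ioo a b := by
  set C := connectedComponentIn U x
  have hCo : IsOpen C := hU.connectedComponentIn
  have hCc : IsConnected C := isConnected_connectedComponentIn_iff.2 hx
  have hCb : Bornology.IsBounded C := hUb.subset (connectedComponentIn_subset U x)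
  have ha := csInf_notMem_of_isOpen hCo hCb.bddBelow
  have hb := csSup_notMem_of_isOpen hCo hCb.bddAbove
  refine ⟨sInf C, sSup C, frontier_connectedComponentIn_subset hU x ?_,
    frontier_connectedComponentIn_subset hU x ?_, ?_⟩
  · exact hCo.frontier_eq ▸ ⟨csInf_mem_closure hCc.nonempty hCb.bddBelow, ha⟩
  · exact hCo.frontier_eq ▸ ⟨csSup_mem_closure hCc.nonempty hCb.bddAbove, hb⟩
  refine (hCc.Ioo_csInf_csSup_subset hCb.bddBelow hCb.bddAbove).antisymm' fun y hy => ?_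
  obtain ⟨hay, hyb⟩ := subset_Icc_csInf_csSup hCb.bddBelow hCb.bddAbove hy
  exact ⟨hay.lt_of_ne (ne_of_mem_of_not_mem hy ha).symm, hyb.lt_of_ne (ne_of_mem_of_not_mem hy hb)⟩

theorem setIntegral_eq_zero_of_forall_connectedComponentIn {X E : Type*} [TopologicalSpace X]
    [LocallyConnectedSpace X] [TopologicalSpace.SeparableSpace X] [MeasurableSpace X]
    [OpensMeasurableSpace X] [NormedAddCommGroup E] [NormedSpace ℝ E] {μ : Measure X}
    {U : Set X} (hU : IsOpen U) {f : X → E} (hf : IntegrableOn f U μ)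
    (h : ∀ x ∈ U, ∫ y in connectedComponentIn U x, f y ∂μ = 0) : ∫ x in U, f x ∂μ = 0 := by
  set S := connectedComponentIn U '' U
  have hdisj : S.PairwiseDisjoint id := by
    rintro _ ⟨x, -, rfl⟩ _ ⟨y, -, rfl⟩ hxy
    refine Set.disjoint_left.2 fun w hwx hwy => hxy ?_
    rw [connectedComponentIn_eq hwx, connectedComponentIn_eq hwy]
  have hopen : ∀ C ∈ S, IsOpen C := by
    rintro _ ⟨x, -, rfl⟩
    exact hU.connectedComponentIn
  have hS : S.Countable := hdisj.countable_of_isOpen hopen (by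
    rintro _ ⟨x, hx, rfl⟩
    exact ⟨x, mem_connectedComponentIn hx⟩)
  have hUS : U = ⋃ C : S, (C : Set X) := by
    refine subset_antisymm (fun x hx => ?_) (iUnion_subset fun C => ?_)
    · exact mem_iUnion.2 ⟨⟨_, x, hx, rfl⟩, mem_connectedComponentIn hx⟩
    · obtain ⟨_, x, -, rfl⟩ := C
      exact connectedComponentIn_subset U x
  have : Countable S := hS.to_subtype
  have hsum := hasSum_integral_iUnion (fun C : S => (hopen C C.2).measurableSet)
    (fun C D hCD => hdisj C.2 D.2 (Subtype.coe_injective.ne hCD)) (hUS ▸ hf)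
  rw [← hUS] at hsum
  refine hsum.unique ?_
  convert hasSum_zero with ⟨_, x, hx, rfl⟩
  exact h x hx

theorem setIntegral_eq_zero_of_hasDerivAt_of_frontier {U : Set ℝ} (hU : IsOpen U)
    (hUb : Bornology.IsBounded U) {f f' : ℝ → ℝ} (hf : ∀ x, HasDerivAt f (f' x) x)
    (hf' : Continuous f') (h0 : ∀ x ∈ frontier U, f x = 0) : ∫ x in U, f' x = 0 := by
  refine setIntegral_eq_zero_of_forall_connectedComponentIn hU (hf'.integrableOn_of_isBounded hUb)
    fun x hx => ?_
  obtain ⟨a, b, ha, hb, hC⟩ := Real.connectedComponentIn_eq_Ioo hU hUb hx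
  have hab : a ≤ b := by
    have := hC ▸ mem_connectedComponentIn hx
    exact (this.1.trans this.2).le
  rw [hC, ← integral_Ioc_eq_integral_Ioo, ← intervalIntegral.integral_of_le hab,
    intervalIntegral.integral_eq_sub_of_hasDerivAt (fun x _ => hf x) (hf'.intervalIntegrable a b),
    h0 a ha, h0 b hb, sub_zero]

theorem setIntegral_fderiv_line_eq_zero {E : Type*} [NormedAddCommGroup E] [NormedSpace ℝ E]
    {U : Set E} (hU : IsOpen U) (hUb : Bornology.IsBounded U) {f : E → ℝ} (hf : ContDiff ℝ 1 f)
    (h0 : ∀ x ∈ frontier U, f x = 0) (p : E) {v : E} (hv : v ≠ 0) :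
    ∫ y in (fun y : ℝ => p + y • v) ⁻¹' U, fderiv ℝ f (p + y • v) v = 0 := by
  set m : ℝ → E := fun y => p + y • v
  have hm : ∀ y, HasDerivAt m v y := fun y => by
    simpa only [one_smul] using ((hasDerivAt_id' y).smul_const v).const_add p
  have hmc : Continuous m := by fun_prop
  have hanti : AntilipschitzWith ‖v‖₊⁻¹ m := AntilipschitzWith.of_le_mul_dist fun a b => by
    simp only [m, dist_eq_norm, add_sub_add_left_eq_sub, ← sub_smul, norm_smul, NNReal.coe_inv,
      coe_nnnorm, Real.norm_eq_abs]
    rw [mul_left_comm, inv_mul_cancel₀ (norm_ne_zero_iff.2 hv), mul_one]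
  refine setIntegral_eq_zero_of_hasDerivAt_of_frontier (hU.preimage hmc)
    (hanti.isBounded_preimage hUb) (f := f ∘ m)
    (fun y => (hf.differentiable one_ne_zero (m y)).hasFDerivAt.comp_hasDerivAt y (hm y))
    (((hf.continuous_fderiv one_ne_zero).clm_apply continuous_const).comp hmc)
    fun y hy => h0 _ (hmc.frontier_preimage_subset U hy)

def splitCoord {ι : Type*} [DecidableEq ι] (i : ι) :
    EuclideanSpace ℝ ι ≃ᵐ ℝ × ({j // ¬ j = i} → ℝ) :=
  (MeasurableEquiv.toLp 2 (ι → ℝ)).symm.trans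
    ((MeasurableEquiv.piEquivPiSubtypeProd (fun _ => ℝ) (· = i)).trans
      ((MeasurableEquiv.funUnique {j // j = i} ℝ).prodCongr (MeasurableEquiv.refl _)))

theorem measurePreserving_splitCoord {ι : Type*} [Fintype ι] [DecidableEq ι] (i : ι) :
    MeasurePreserving (splitCoord i) := by
  have h := volume_preserving_piEquivPiSubtypeProd (fun _ : ι => ℝ) (· = i)
  rw [Measure.volume_eq_prod, Subsingleton.elim (Subtype.fintype _) Unique.fintype] at h
  exact (((volume_preserving_funUnique {j // j = i} ℝ).prod (MeasurePreserving.id _)).comp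
    h).comp (EuclideanSpace.volume_preserving_symm_measurableEquiv_toLp ι)

theorem splitCoord_symm_apply {ι : Type*} [DecidableEq ι] (i : ι) (y : ℝ)
    (w : {j // ¬ j = i} → ℝ) :
    (splitCoord i).symm (y, w) = (splitCoord i).symm (0, w) + y • EuclideanSpace.single i 1 := by
  have hsymm : ∀ y, (splitCoord i).symm (y, w) =
      WithLp.toLp 2 (fun j => if h : j = i then y else w ⟨j, h⟩) := fun _ => rfl
  ext j
  by_cases h : j = i
  · subst h; simp [hsymm]
  · simp [hsymm, h]

theorem setIntegral_fderiv_single_eq_zero {ι : Type*} [Fintype ι] [DecidableEq ι]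
    {U : Set (EuclideanSpace ℝ ι)} (hU : IsOpen U) (hUb : Bornology.IsBounded U)
    {f : EuclideanSpace ℝ ι → ℝ} (hf : ContDiff ℝ 1 f) (h0 : ∀ x ∈ frontier U, f x = 0) (i : ι) :
    ∫ x in U, fderiv ℝ f x (EuclideanSpace.single i 1) = 0 := by
  set g := fun x => fderiv ℝ f x (EuclideanSpace.single i 1)
  have hg : Continuous g := (hf.continuous_fderiv one_ne_zero).clm_apply continuous_const
  have hgU : Integrable (U.indicator g) :=
    (integrable_indicator_iff hU.measurableSet).2 (hg.integrableOn_of_isBounded hUb)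
  have hΦ := (measurePreserving_splitCoord i).symm
  have hline : ∀ w, ∫ y, U.indicator g ((splitCoord i).symm (y, w)) = 0 := fun w => by
    set p := (splitCoord i).symm (0, w)
    have hw : ∀ y, U.indicator g ((splitCoord i).symm (y, w)) =
        ((fun y : ℝ => p + y • EuclideanSpace.single i 1) ⁻¹' U).indicator
          (fun y => g (p + y • EuclideanSpace.single i 1)) y := fun y => by
      rw [splitCoord_symm_apply]
      exact (indicator_comp_right _).symm
    simp_rw [hw]
    rw [integral_indicator (hU.measurableSet.preimage (by fun_prop))]
    exact setIntegral_fderiv_line_eq_zero hU hUb hf h0 _ (by simp)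
  have hemb := (splitCoord i).symm.measurableEmbedding
  rw [← integral_indicator hU.measurableSet, ← hΦ.integral_comp hemb, Measure.volume_eq_prod,
    integral_prod_symm (fun z => U.indicator g ((splitCoord i).symm z))
      ((hΦ.integrable_comp_emb hemb).2 hgU)]
  simp [hline]

section EuclideanCalculus

variable {n : ℕ}

theorem diverg_sub {Φ Ψ : Euc n → Euc n} {x : Euc n} (hΦ : DifferentiableAt ℝ Φ x)
    (hΨ : DifferentiableAt ℝ Ψ x) :
    diverg (fun y => Φ y - Ψ y) x = diverg Φ x - diverg Ψ x := by
  simp only [diverg, ← Finset.sum_sub_distrib, PiLp.sub_apply]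
  refine Finset.sum_congr rfl fun i _ => ?_
  rw [fderiv_fun_sub (differentiableAt_euclidean.1 hΦ i) (differentiableAt_euclidean.1 hΨ i)]
  rfl

theorem diverg_smul {φ : Euc n → ℝ} {Φ : Euc n → Euc n} {x : Euc n}
    (hφ : DifferentiableAt ℝ φ x) (hΦ : DifferentiableAt ℝ Φ x) :
    diverg (fun y => φ y • Φ y) x = φ x * diverg Φ x + fderiv ℝ φ x (Φ x) := by
  have hgrad : fderiv ℝ φ x (Φ x) = ∑ i, Φ x i * fderiv ℝ φ x (EuclideanSpace.single i 1) := by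
    simp only [← inner_gradient_left, PiLp.inner_apply]
    simp
  simp only [diverg, PiLp.smul_apply, smul_eq_mul, hgrad, Finset.mul_sum,
    ← Finset.sum_add_distrib]
  refine Finset.sum_congr rfl fun i _ => ?_
  rw [fderiv_fun_mul hφ (differentiableAt_euclidean.1 hΦ i)]
  simp only [add_apply, smul_apply, smul_eq_mul]

theorem diverg_sub_const (c x : Euc n) : diverg (fun y => y - c) x = n := by
  have hproj : ∀ i : Fin n, fderiv ℝ (fun y : Euc n => y i) x = EuclideanSpace.proj i :=
    fun i => (EuclideanSpace.proj (𝕜 := ℝ) i).fderiv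
  simp [diverg, fderiv_sub_const, hproj]

theorem ContDiff.gradient {E : Type*} [NormedAddCommGroup E] [InnerProductSpace ℝ E]
    [CompleteSpace E] {f : E → ℝ} {m : WithTop ℕ∞} (hf : ContDiff ℝ (m + 1) f) :
    ContDiff ℝ m (gradient f) :=
  (InnerProductSpace.toDual ℝ E).symm.contDiff.comp (hf.fderiv_right le_rfl)

theorem ContDiff.continuous_diverg {Φ : Euc n → Euc n} (hΦ : ContDiff ℝ 1 Φ) :
    Continuous (diverg Φ) :=
  continuous_finsetSum _ fun i _ =>
    ((contDiff_euclidean.1 hΦ i).continuous_fderiv one_ne_zero).clm_apply continuous_const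

theorem ContDiff.continuous_lapl {f : Euc n → ℝ} (hf : ContDiff ℝ 2 f) : Continuous (lapl f) :=
  (hf.gradient (m := 1)).continuous_diverg

theorem gradient_sq {f : Euc n → ℝ} (hf : Differentiable ℝ f) :
    gradient (fun y => f y ^ 2) = fun y => (2 * f y) • gradient f y := by
  refine gradient_eq fun y => hasGradientAt_iff_hasFDerivAt.2 ?_
  rw [map_smul, toDual_gradient]
  simpa using (hf y).hasFDerivAt.pow 2

theorem lapl_sq {f : Euc n → ℝ} (hf : ContDiff ℝ 2 f) (x : Euc n) :
    lapl (fun y => f y ^ 2) x = 2 * f x * lapl f x + 2 * ‖gradient f x‖ ^ 2 := by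
  have hgrad : ContDiff ℝ 1 (gradient f) := hf.gradient
  have hdf := hf.differentiable two_ne_zero
  rw [lapl, gradient_sq hdf, diverg_smul ((hdf x).const_mul 2) (hgrad.differentiable one_ne_zero x),
    fderiv_const_mul (hdf x), lapl]
  simp [← inner_gradient_left]

theorem diverg_smul_gradient_sub {u φ : Euc n → ℝ} (hu : ContDiff ℝ 2 u) (hφ : ContDiff ℝ 2 φ)
    (x : Euc n) :
    diverg (fun y => φ y • gradient u y - u y • gradient φ y) x =
      φ x * lapl u x - u x * lapl φ x := by
  have hdu := (hu.gradient (m := 1)).differentiable one_ne_zero x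
  have hdφ := (hφ.gradient (m := 1)).differentiable one_ne_zero x
  have hu' := hu.differentiable two_ne_zero x
  have hφ' := hφ.differentiable two_ne_zero x
  rw [diverg_sub (Φ := fun y => φ y • gradient u y) (Ψ := fun y => u y • gradient φ y)
      (hφ'.smul hdu) (hu'.smul hdφ), diverg_smul hφ' hdu, diverg_smul hu' hdφ,
    ← inner_gradient_left, ← inner_gradient_left, real_inner_comm, lapl, lapl]
  ring

end EuclideanCalculus

theorem integral_diverg_eq_zero {n : ℕ} {U : Set (Euc n)} (hU : IsOpen U)
    (hUb : Bornology.IsBounded U) {F : Euc n → Euc n} (hF : ContDiff ℝ 1 F)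
    (h0 : ∀ x ∈ frontier U, F x = 0) : ∫ x in U, diverg F x = 0 := by
  have hFi := contDiff_euclidean.1 hF
  simp only [diverg]
  rw [integral_finsetSum _ fun i _ => (((hFi i).continuous_fderiv one_ne_zero).clm_apply
    continuous_const).integrableOn_of_isBounded hUb]
  exact Finset.sum_eq_zero fun i _ =>
    setIntegral_fderiv_single_eq_zero hU hUb (hFi i) (fun x hx => by simp [h0 x hx]) i

theorem integral_mul_lapl_sub_mul_lapl_eq_zero {n : ℕ} {U : Set (Euc n)} (hU : IsOpen U)
    (hUb : Bornology.IsBounded U) {u φ : Euc n → ℝ} (hu : ContDiff ℝ 2 u) (hφ : ContDiff ℝ 2 φ)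
    (hu0 : ∀ x ∈ frontier U, u x = 0) (hdu0 : ∀ x ∈ frontier U, gradient u x = 0) :
    ∫ x in U, (φ x * lapl u x - u x * lapl φ x) = 0 := by
  simp_rw [← diverg_smul_gradient_sub hu hφ]
  refine integral_diverg_eq_zero hU hUb ?_ fun x hx => by simp [hu0 x hx, hdu0 x hx]
  exact ((hφ.of_le one_le_two).smul hu.gradient).sub ((hu.of_le one_le_two).smul hφ.gradient)

theorem setIntegral_weighted_energy_identity {n : ℕ} {U : Set (Euc n)} (hU : IsOpen U)
    (hUb : Bornology.IsBounded U) {w v φ : Euc n → ℝ} (hw : ContDiff ℝ 2 w) (hv : Continuous v)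
    (hφ : ContDiff ℝ 2 φ) (hw0 : ∀ x ∈ frontier U, w x = 0) :
    ∫ x in U, (2 * w x * v x * φ x - w x ^ 2 * lapl φ x) =
      2 * ((∫ x in U, w x * (v x - lapl w x) * φ x) - ∫ x in U, ‖gradient w x‖ ^ 2 * φ x) := by
  have hw2 : ContDiff ℝ 2 (fun y => w y ^ 2) := hw.pow 2
  have hgreen := integral_mul_lapl_sub_mul_lapl_eq_zero hU hUb hw2 hφ (by simp_all)
    (fun x hx => by simp [gradient_sq (hw.differentiable two_ne_zero), hw0 x hx])
  have hpt : ∀ x, 2 * w x * v x * φ x - w x ^ 2 * lapl φ x =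
      2 * (w x * (v x - lapl w x) * φ x) - 2 * (‖gradient w x‖ ^ 2 * φ x) +
        (φ x * lapl (fun y => w y ^ 2) x - w x ^ 2 * lapl φ x) := fun x => by
    rw [lapl_sq hw]; ring
  have := hw.continuous; have := hφ.continuous; have := (hw.gradient (m := 1)).continuous
  have := hw.continuous_lapl; have := hφ.continuous_lapl; have := hw2.continuous_lapl
  rw [setIntegral_congr_fun hU.measurableSet fun x _ => hpt x, integral_add, integral_sub,
    hgreen, integral_const_mul, integral_const_mul]
  · ring
  all_goals exact Continuous.integrableOn_of_isBounded (by fun_prop) hUb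

section Gaussian

variable {n : ℕ} (xg : Euc n) (T lam : ℝ)

theorem contDiff_Gweight {k : WithTop ℕ∞} (t : ℝ) :
    ContDiff ℝ k (fun y => Gweight xg T lam y t) :=
  contDiff_const.mul ((((contDiff_norm_sq ℝ).comp (contDiff_id.sub contDiff_const)).neg.div_const
    _).exp)

theorem gradient_Gweight (t : ℝ) :
    gradient (fun y => Gweight xg T lam y t) =
      fun y => (-(2 * (T - t + lam))⁻¹ * Gweight xg T lam y t) • (y - xg) := by
  have hG : (fun y => Gweight xg T lam y t) = fun y =>
      (T - t + lam) ^ (-(n : ℝ) / 2) * Real.exp (-(4 * (T - t + lam))⁻¹ * ‖y - xg‖ ^ 2) := by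
    funext y
    rw [Gweight]
    ring_nf
  refine gradient_eq fun y => hasGradientAt_iff_hasFDerivAt.2 ?_
  rw [hG]
  refine (((((hasFDerivAt_id y).sub_const xg).norm_sq.const_mul
    (-(4 * (T - t + lam))⁻¹)).exp).const_mul _).congr_fderiv ?_
  ext v
  simp only [Gweight]
  generalize T - t + lam = τ
  simp
  ring_nf

theorem lapl_Gweight (t : ℝ) (x : Euc n) :
    lapl (fun y => Gweight xg T lam y t) x =
      Gweight xg T lam x t *
        (‖x - xg‖ ^ 2 / (4 * (T - t + lam) ^ 2) - n / (2 * (T - t + lam))) := by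
  have hG := (contDiff_Gweight xg T lam (k := 1) t).differentiable one_ne_zero
  rw [lapl, gradient_Gweight]
  beta_reduce
  rw [diverg_smul (Φ := fun y => y - xg) (by fun_prop) (by fun_prop), diverg_sub_const,
    fderiv_const_mul (hG x), smul_apply, ← inner_gradient_left,
    gradient_Gweight, inner_smul_left, real_inner_self_eq_norm_sq]
  simp only [conj_trivial]
  generalize T - t + lam = τ
  ring

theorem hasDerivAt_Gweight (x : Euc n) {t : ℝ} (ht : T - t + lam ≠ 0) :
    HasDerivAt (Gweight xg T lam x) (-lapl (fun y => Gweight xg T lam y t) x) t := by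
  have hτ : HasDerivAt (fun s => T - s + lam) (-1) t := by
    simpa using ((hasDerivAt_id t).const_sub T).add_const lam
  have hpow := hτ.rpow_const (p := -(n : ℝ) / 2) (Or.inl ht)
  have hexp := ((hasDerivAt_const t (-‖x - xg‖ ^ 2)).div (hτ.const_mul 4)
    (mul_ne_zero four_ne_zero ht)).exp
  simp only [Pi.div_apply] at hexp
  refine (hpow.mul hexp).congr_deriv ?_
  rw [lapl_Gweight, Gweight, Real.rpow_sub_one ht]
  generalize T - t + lam = τ at *
  field_simp
  ring

theorem continuousAt_Gweight {p : ℝ × Euc n} (hp : T - p.1 + lam ≠ 0) :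
    ContinuousAt (fun q : ℝ × Euc n => Gweight xg T lam q.2 q.1) p := by
  unfold Gweight
  fun_prop (disch := simp [hp])

end Gaussian

theorem hasDerivAt_setIntegral_of_continuousOn {X E : Type*} [TopologicalSpace X] [T2Space X]
    [MeasurableSpace X] [OpensMeasurableSpace X] [NormedAddCommGroup E] [NormedSpace ℝ E]
    {μ : Measure X} [IsFiniteMeasureOnCompacts μ] {S K : Set X} (hS : MeasurableSet S)
    (hK : IsCompact K) (hSK : S ⊆ K) {F F' : ℝ → X → E} {t ε : ℝ} (hε : 0 < ε)
    (hF : ∀ s ∈ ball t ε, ContinuousOn (F s) K)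
    (hF' : ContinuousOn (Function.uncurry F') (closedBall t ε ×ˢ K))
    (hderiv : ∀ x ∈ K, ∀ s ∈ ball t ε, HasDerivAt (F · x) (F' s x) s) :
    HasDerivAt (fun s => ∫ x in S, F s x ∂μ) (∫ x in S, F' t x ∂μ) t := by
  obtain ⟨C, hC⟩ := ((isCompact_closedBall t ε).prod hK).exists_bound_of_continuousOn hF'
  have hint : ∀ s ∈ ball t ε, IntegrableOn (F s) S μ := fun s hs =>
    ((hF s hs).integrableOn_compact hK).mono_set hSK
  have hF't : ContinuousOn (F' t) K := hF'.comp (continuousOn_const.prodMk continuousOn_id)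
    fun x hx => ⟨mem_closedBall_self hε.le, hx⟩
  refine (hasDerivAt_integral_of_dominated_loc_of_deriv_le (bound := fun _ => C)
    (ball_mem_nhds t hε) (eventually_of_mem (ball_mem_nhds t hε) fun s hs =>
      (hint s hs).aestronglyMeasurable) (hint t (mem_ball_self hε))
    ((hF't.integrableOn_compact hK).mono_set hSK).aestronglyMeasurable
    ((ae_restrict_mem hS).mono fun x hx s hs => hC (s, x) ⟨ball_subset_closedBall hs, hSK hx⟩)
    (integrableOn_const ((measure_mono hSK).trans_lt hK.measure_lt_top).ne)
    ((ae_restrict_mem hS).mono fun x hx s hs => hderiv x (hSK hx) s hs)).2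

theorem hasDerivAt_deriv_of_contDiff_uncurry {E F : Type*} [NormedAddCommGroup E]
    [NormedSpace ℝ E] [NormedAddCommGroup F] [NormedSpace ℝ F] {f : ℝ → E → F}
    (hf : ContDiff ℝ 1 (Function.uncurry f)) (s : ℝ) (x : E) :
    HasDerivAt (f · x) (fderiv ℝ (Function.uncurry f) (s, x) (1, 0)) s := by
  have h := (hf.differentiable one_ne_zero (s, x)).hasFDerivAt.comp_hasDerivAt s
    ((hasDerivAt_id s).prodMk (hasDerivAt_const s x))
  exact h

theorem continuous_deriv_of_contDiff_uncurry {E F : Type*} [NormedAddCommGroup E]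
    [NormedSpace ℝ E] [NormedAddCommGroup F] [NormedSpace ℝ F] {f : ℝ → E → F}
    (hf : ContDiff ℝ 1 (Function.uncurry f)) :
    Continuous fun p : ℝ × E => deriv (f · p.2) p.1 := by
  simp_rw [fun p : ℝ × E => (hasDerivAt_deriv_of_contDiff_uncurry hf p.1 p.2).deriv]
  exact (hf.continuous_fderiv one_ne_zero).clm_apply continuous_const

theorem hasDerivAt_integral_sq_mul_Gweight {n : ℕ} (xg : Euc n) (T lam : ℝ)
    {z : ℝ → Euc n → ℝ} (hz : ContDiff ℝ 1 (Function.uncurry z)) {S : Set (Euc n)}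
    (hS : MeasurableSet S) (hSb : Bornology.IsBounded S) {t : ℝ} (ht : T - t + lam ≠ 0) :
    HasDerivAt (fun s => ∫ x in S, z s x ^ 2 * Gweight xg T lam x s)
      (∫ x in S, (2 * z t x * deriv (z · x) t * Gweight xg T lam x t -
        z t x ^ 2 * lapl (fun y => Gweight xg T lam y t) x)) t := by
  set ε := |T - t + lam| / 2 with hε_def
  have hε : 0 < ε := half_pos (abs_pos.2 ht)
  have hτ : ∀ s ∈ closedBall t ε, T - s + lam ≠ 0 := fun s hs h0 => by
    rw [mem_closedBall, Real.dist_eq, show s - t = T - t + lam by linarith] at hs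
    linarith [abs_pos.2 ht]
  have hzc := hz.continuous
  have hdz := continuous_deriv_of_contDiff_uncurry hz
  refine hasDerivAt_setIntegral_of_continuousOn
    (F := fun s x => z s x ^ 2 * Gweight xg T lam x s)
    (F' := fun s x => 2 * z s x * deriv (z · x) s * Gweight xg T lam x s -
      z s x ^ 2 * lapl (fun y => Gweight xg T lam y s) x)
    hS hSb.isCompact_closure subset_closure hε (fun s _ => ?_) ?_ fun x _ s hs => ?_
  · have := (contDiff_Gweight xg T lam (k := 0) s).continuous
    fun_prop
  · simp_rw [lapl_Gweight]
    refine fun p hp => ContinuousAt.continuousWithinAt ?_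
    have := continuousAt_Gweight xg T lam (hτ p.1 hp.1)
    have := hτ p.1 hp.1
    fun_prop (disch := simp [this])
  · have hzx := (hasDerivAt_deriv_of_contDiff_uncurry hz s x).differentiableAt.hasDerivAt
    refine ((hzx.fun_pow 2).fun_mul
      (hasDerivAt_Gweight xg T lam x (hτ s (ball_subset_closedBall hs)))).congr_deriv ?_
    push_cast
    ring

theorem frequency_function_derivative_identity_general
    {n : ℕ} (Ω : Set (Euc n))
    (hΩo : IsOpen Ω) (hΩb : Bornology.IsBounded Ω)
    (xg : Euc n) (Rg δg : ℝ)
    (G : Set (Euc n)) (hG : G = Ω ∩ Metric.ball xg ((1 + 2 * δg) * Rg))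
    (T : ℝ)
    (z : ℝ → Euc n → ℝ)
    -- regularity of `z` (a classical strengthening of
    -- `z ∈ H¹(0,T;L²(G)) ∩ L²(0,T;H²(G)∩H₀¹(G))`)
    (hz : ContDiff ℝ 2 (Function.uncurry z))
    (hzbc : ∀ t ∈ Set.Icc (0:ℝ) T, ∀ x ∈ frontier G, z t x = 0) :
    ∀ lam > (0:ℝ), ∀ t ∈ Set.Ioc (0:ℝ) T,
      (∫ x in G, (z t x) ^ 2 * Gweight xg T lam x t) ≠ 0 →
      HasDerivAt (fun s => ∫ x in G, (z s x) ^ 2 * Gweight xg T lam x s)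
        (2 * ((∫ x in G,
            z t x * (deriv (fun s => z s x) t - lapl (z t) x) * Gweight xg T lam x t)
          - Nfreq G xg T lam z t * (∫ x in G, (z t x) ^ 2 * Gweight xg T lam x t))) t := by
  intro lam hlam t ht hne
  have hGo : IsOpen G := hG ▸ hΩo.inter isOpen_ball
  have hGb : Bornology.IsBounded G := hΩb.subset (hG ▸ inter_subset_left)
  have hz1 : ContDiff ℝ 1 (Function.uncurry z) := hz.of_le one_le_two
  have hNfreq : Nfreq G xg T lam z t * (∫ x in G, (z t x) ^ 2 * Gweight xg T lam x t) =
      ∫ x in G, ‖gradient (z t) x‖ ^ 2 * Gweight xg T lam x t := div_mul_cancel₀ _ hne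
  have hzt : ContDiff ℝ 2 (z t) := hz.comp (contDiff_const.prodMk contDiff_id)
  have hv : Continuous fun x => deriv (z · x) t :=
    (continuous_deriv_of_contDiff_uncurry hz1).comp (continuous_const.prodMk continuous_id)
  have henergy := setIntegral_weighted_energy_identity hGo hGb hzt hv
    (contDiff_Gweight xg T lam t) (hzbc t (Ioc_subset_Icc_self ht))
  rw [hNfreq, ← henergy]
  have hτ : 0 < T - t + lam := by linarith [ht.2, hlam]
  exact hasDerivAt_integral_sq_mul_Gweight xg T lam hz1 hGo.measurableSet hGb hτ.ne'

/-- Lemma 3.1 (i): for `t ∈ (0,T]` and `λ > 0` with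
`∫_G |z|²G_λ dx ≠ 0`,
`(1/2)(d/dt)∫_G |z|²G_λ dx + N_λ(t)∫_G |z|²G_λ dx = ∫_G z(∂ₜz − Δz)G_λ dx`. -/
theorem frequency_function_derivative_identity
    {n : ℕ} (hn : 1 ≤ n) (Ω : Set (Euc n))
    (hΩo : IsOpen Ω) (hΩb : Bornology.IsBounded Ω) (hΩc : IsConnected Ω)
    (g xg : Euc n) (Rg δg : ℝ)
    (hg : g ∈ frontier Ω) (hxg : xg ∈ Ω) (hRg : 0 < Rg) (hδg : δg ∈ Set.Ioc (0:ℝ) 1)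
    (hball : dist g xg < Rg)
    (G : Set (Euc n)) (hG : G = Ω ∩ Metric.ball xg ((1 + 2 * δg) * Rg))
    (hstar : StarConvex ℝ xg G)
    (T : ℝ) (hT : 0 < T)
    (z : ℝ → Euc n → ℝ)
    -- regularity of `z` (a classical strengthening of
    -- `z ∈ H¹(0,T;L²(G)) ∩ L²(0,T;H²(G)∩H₀¹(G))`)
    (hz : ContDiff ℝ 2 (Function.uncurry z))
    (hzbc : ∀ t ∈ Set.Icc (0:ℝ) T, ∀ x ∈ frontier G, z t x = 0) :
    ∀ lam > (0:ℝ), ∀ t ∈ Set.Ioc (0:ℝ) T,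
      (∫ x in G, (z t x) ^ 2 * Gweight xg T lam x t) ≠ 0 →
      HasDerivAt (fun s => ∫ x in G, (z s x) ^ 2 * Gweight xg T lam x s)
        (2 * ((∫ x in G,
            z t x * (deriv (fun s => z s x) t - lapl (z t) x) * Gweight xg T lam x t)
          - Nfreq G xg T lam z t * (∫ x in G, (z t x) ^ 2 * Gweight xg T lam x t))) t :=
  frequency_function_derivative_identity_general Ω hΩo hΩb xg Rg δg G hG T z hz hzbc
end
end

section
/- Let G ⊂ ℝⁿ be a bounded domain with C² boundary and x₀ ∈ G. Then for every f ∈ H₀¹(G) and every λ > 0: ∫_G (|x−x₀|²/(8λ)) |f(x)|² e^{−|x−x₀|²/(4λ)} dx ≤ 2λ ∫_G |∇f(x)|² e^{−|x−x₀|²/(4λ)} dx + (n/2) ∫_G |f(x)|² e^{−|x−x₀|²/(4λ)} dx. -/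
open MeasureTheory Set ENNReal

noncomputable section

/-!
The vector field `Φ x = f x ^ 2 * exp (-‖x - x₀‖² / (4λ)) • (x - x₀)` vanishes on `∂G`, so its
divergence `n f² w + 2 f ⟪∇f, x - x₀⟫ w - ‖x - x₀‖² f² w / (2λ)` (with `w` the Gaussian weight)
has integral zero over `G`. Bounding the cross term by Cauchy–Schwarz and
`2ab ≤ 4λ b² + a² / (4λ)` gives the inequality.

Since `f` is differentiable only inside `G`, the divergence theorem is proved directly: after a
linear change of variables making the direction of differentiation a coordinate, Fubini reduces it
to one dimension, where an open bounded set is a disjoint union of intervals `(a, b)` with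
endpoints outside the set, on each of which `∫ φ' = φ b - φ a = 0`.
-/

open Measure Filter Topology Bornology Module
open scoped RealInnerProductSpace

theorem continuous_indicator_of_continuousOn_closure {X M : Type*} [TopologicalSpace X]
    [TopologicalSpace M] [Zero M] {G : Set X} {h : X → M} (hc : ContinuousOn h (closure G))
    (h0 : ∀ x ∈ frontier G, h x = 0) : Continuous (G.indicator h) := by
  classical
  rw [← piecewise_eq_indicator]
  exact continuous_piecewise (fun x hx => by simp [h0 x hx]) hc continuousOn_const

theorem exists_connectedComponentIn_eq_Ioo {S : Set ℝ} (hS : IsOpen S) (hSb : IsBounded S)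
    {t : ℝ} (ht : t ∈ S) :
    ∃ a b, connectedComponentIn S t = Ioo a b ∧ a ∉ S ∧ b ∉ S := by
  set C := connectedComponentIn S t
  have hC : IsConnected C := isConnected_connectedComponentIn_iff.2 ht
  have hCb : IsBounded C := hSb.subset (connectedComponentIn_subset S t)
  have hCeq : C = Ioo (sInf C) (sSup C) :=
    ((hS.connectedComponentIn.subset_interior_iff.2
      (subset_Icc_csInf_csSup hCb.bddBelow hCb.bddAbove)).trans_eq interior_Icc).antisymm
      (hC.Ioo_csInf_csSup_subset hCb.bddBelow hCb.bddAbove)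
  -- A point of `S` in the closure of `C` could be adjoined to the component `C`.
  have hnotS : ∀ a ∈ closure C, a ∉ C → a ∉ S := fun a ha haC haS =>
    haC <| (hC.isPreconnected.subset_closure (subset_insert a C)
      (insert_subset ha subset_closure)).subset_connectedComponentIn
      (mem_insert_of_mem _ (mem_connectedComponentIn ht))
      (insert_subset haS (connectedComponentIn_subset S t)) (mem_insert a C)
  refine ⟨sInf C, sSup C, hCeq, hnotS _ (csInf_mem_closure hC.nonempty hCb.bddBelow) ?_,
    hnotS _ (csSup_mem_closure hC.nonempty hCb.bddAbove) ?_⟩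
  · exact fun h => (hCeq.subset h).1.false
  · exact fun h => (hCeq.subset h).2.false

theorem setIntegral_deriv_eq_zero {S : Set ℝ} (hS : IsOpen S) (hSb : IsBounded S)
    {φ ψ : ℝ → ℝ} (hφ : Continuous φ) (hφ0 : ∀ t ∉ S, φ t = 0)
    (hd : ∀ t ∈ S, HasDerivAt φ (ψ t) t) (hψ : IntegrableOn ψ S) :
    ∫ t in S, ψ t = 0 := by
  have hcomponent : ∀ t ∈ S, ∫ s in connectedComponentIn S t, ψ s = 0 := by
    intro t ht
    obtain ⟨a, b, hC, ha, hb⟩ := exists_connectedComponentIn_eq_Ioo hS hSb ht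
    have hab : a ≤ b := by
      have := hC ▸ mem_connectedComponentIn ht
      exact this.1.le.trans this.2.le
    have hCS : Ioo a b ⊆ S := hC ▸ connectedComponentIn_subset S t
    rw [hC, ← integral_Ioc_eq_integral_Ioo, ← intervalIntegral.integral_of_le hab,
      intervalIntegral.integral_eq_sub_of_hasDerivAt_of_le hab hφ.continuousOn
        (fun s hs => hd s (hCS hs))
        ((intervalIntegrable_iff_integrableOn_Ioo_of_le hab).2 (hψ.mono_set hCS)),
      hφ0 a ha, hφ0 b hb, sub_self]
  set T := connectedComponentIn S '' S
  have hTdisj : T.PairwiseDisjoint id := by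
    rintro _ ⟨t, -, rfl⟩ _ ⟨t', -, rfl⟩ hne
    refine disjoint_left.2 fun z hz hz' => hne ?_
    rw [connectedComponentIn_eq hz, connectedComponentIn_eq hz']
  have hTc : T.Countable := hTdisj.countable_of_isOpen
    (by rintro _ ⟨t, -, rfl⟩; exact hS.connectedComponentIn)
    (by rintro _ ⟨t, ht, rfl⟩; exact ⟨t, mem_connectedComponentIn ht⟩)
  have hUnion : S = ⋃ C : T, (C : Set ℝ) := by
    rw [← sUnion_eq_iUnion, sUnion_image]
    exact subset_antisymm (fun t ht => mem_biUnion ht (mem_connectedComponentIn ht))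
      (iUnion₂_subset fun t _ => connectedComponentIn_subset S t)
  have : Countable T := hTc.to_subtype
  rw [hUnion, integral_iUnion (s := fun C : T => (C : Set ℝ))
    (fun ⟨_, t, _, rfl⟩ => hS.connectedComponentIn.measurableSet)
    (fun C C' hne => hTdisj C.2 C'.2 (Subtype.coe_injective.ne hne)) (hUnion ▸ hψ)]
  refine (tsum_congr fun C => ?_).trans tsum_zero
  obtain ⟨_, t, ht, rfl⟩ := C
  exact hcomponent t ht

theorem setIntegral_prod_deriv_snd_eq_zero {F : Type*} [MeasurableSpace F]
    [PseudoMetricSpace F] [SecondCountableTopology F] [OpensMeasurableSpace F]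
    {μ : Measure F} [SFinite μ]
    {S : Set (F × ℝ)} (hS : IsOpen S) (hSb : IsBounded S)
    {u D : F × ℝ → ℝ} (hu : Continuous u) (hu0 : ∀ p ∉ S, u p = 0)
    (hd : ∀ p ∈ S, HasDerivAt (fun t => u (p.1, t)) (D p) p.2)
    (hD : IntegrableOn D S (μ.prod volume)) :
    ∫ p in S, D p ∂μ.prod volume = 0 := by
  have hInt := (integrable_indicator_iff hS.measurableSet).2 hD
  rw [← integral_indicator hS.measurableSet, integral_prod _ hInt]
  refine integral_eq_zero_of_ae ?_
  filter_upwards [hInt.prod_right_ae] with x hx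
  have hSx : IsOpen (Prod.mk x ⁻¹' S) := hS.preimage (Continuous.prodMk_right x)
  have hslice : (fun t => S.indicator D (x, t)) = (Prod.mk x ⁻¹' S).indicator (fun t => D (x, t)) :=
    funext fun t => (indicator_comp_right (Prod.mk x) (g := D) (s := S) (x := t)).symm
  rw [hslice, integrable_indicator_iff hSx.measurableSet] at hx
  rw [Pi.zero_apply, hslice, integral_indicator hSx.measurableSet]
  refine setIntegral_deriv_eq_zero hSx ?_ (hu.comp (Continuous.prodMk_right x))
    (fun t ht => hu0 _ ht) (fun t ht => hd (x, t) ht) hx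
  exact ((LipschitzWith.prod_snd).isBounded_image hSb).subset fun t ht => ⟨(x, t), ht, rfl⟩

section

variable {E : Type*} [NormedAddCommGroup E] [NormedSpace ℝ E] [MeasurableSpace E] [BorelSpace E]
  [FiniteDimensional ℝ E] {μ : Measure E} [IsAddHaarMeasure μ]

variable (μ) in
theorem exists_continuousLinearEquiv_prod_measurePreserving {v : E} (hv : v ≠ 0) :
    ∃ (L : E ≃L[ℝ] (Fin (finrank ℝ E - 1) → ℝ) × ℝ) (ν : Measure (Fin (finrank ℝ E - 1) → ℝ)),
      SigmaFinite ν ∧ MeasurePreserving L μ (ν.prod volume) ∧ L v = (0, 1) := by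
  have : Nontrivial E := nontrivial_of_ne v 0 hv
  let F := Fin (finrank ℝ E - 1) → ℝ
  obtain ⟨L, hL⟩ : ∃ L : E ≃L[ℝ] F × ℝ, L v = (0, 1) := by
    have hdim : finrank ℝ (F × ℝ) = finrank ℝ E := by
      simpa [F] using Nat.sub_add_cancel finrank_pos
    let L₀ : E ≃L[ℝ] F × ℝ := (ContinuousLinearEquiv.ofFinrankEq hdim).symm
    obtain ⟨M, hM⟩ : ∃ M : (F × ℝ) ≃L[ℝ] (F × ℝ), M (L₀ v) = (0, 1) :=
      SeparatingDual.exists_continuousLinearEquiv_apply_eq (by simpa using hv) (by simp)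
    exact ⟨L₀.trans M, hM⟩
  have : IsAddHaarMeasure (map L μ) := L.isAddHaarMeasure_map μ
  refine ⟨L, addHaarScalarFactor (map L μ) (addHaar.prod volume) • addHaar, inferInstance,
    ⟨L.continuous.measurable, ?_⟩, hL⟩
  rw [prod_smul_left]
  exact isAddLeftInvariant_eq_smul _ _

theorem setIntegral_fderiv_apply_eq_zero {S : Set E} (hS : IsOpen S) (hSb : IsBounded S)
    {u : E → ℝ} (hu : Continuous u) (hu0 : ∀ p ∉ S, u p = 0)
    (hd : ∀ p ∈ S, DifferentiableAt ℝ u p) (v : E)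
    (hD : IntegrableOn (fun p => fderiv ℝ u p v) S μ) :
    ∫ p in S, fderiv ℝ u p v ∂μ = 0 := by
  rcases eq_or_ne v 0 with rfl | hv
  · simp
  obtain ⟨L, ν, _, hLμ, hLv⟩ := exists_continuousLinearEquiv_prod_measurePreserving μ hv
  have hLemb : MeasurableEmbedding L := L.toHomeomorph.measurableEmbedding
  have hS' : L ⁻¹' (L.symm ⁻¹' S) = S := by ext; simp
  set D : _ → ℝ := fun q => fderiv ℝ u (L.symm q) v
  have hDL : (fun p => fderiv ℝ u p v) = D ∘ L := by ext; simp [D]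
  rw [hDL, ← hS', hLμ.integrableOn_comp_preimage hLemb] at hD
  have hchange := hLμ.setIntegral_preimage_emb hLemb D (L.symm ⁻¹' S)
  simp only [hS', D, ContinuousLinearEquiv.symm_apply_apply] at hchange
  rw [hchange]
  refine setIntegral_prod_deriv_snd_eq_zero (hS.preimage L.symm.continuous)
    (L.symm.antilipschitz.isBounded_preimage hSb)
    (hu.comp L.symm.continuous) (fun q hq => hu0 _ hq) (fun q hq => ?_) hD
  have hline : HasDerivAt (fun t => L.symm (q.1, t)) v q.2 := by
    have := (L.symm : _ →L[ℝ] E).hasFDerivAt.comp_hasDerivAt q.2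
      ((hasDerivAt_const q.2 q.1).prodMk (hasDerivAt_id q.2))
    simpa [← hLv, Function.comp_def] using this
  exact (hd _ hq).hasFDerivAt.comp_hasDerivAt q.2 hline

theorem setIntegral_fderiv_apply_eq_zero_of_frontier {G : Set E} (hGo : IsOpen G)
    (hGb : IsBounded G)
    {h : E → ℝ} (hc : ContinuousOn h (closure G)) (h0 : ∀ x ∈ frontier G, h x = 0)
    (hd : ∀ x ∈ G, DifferentiableAt ℝ h x) (v : E)
    (hi : IntegrableOn (fun x => fderiv ℝ h x v) G μ) :
    ∫ x in G, fderiv ℝ h x v ∂μ = 0 := by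
  have hloc : ∀ x ∈ G, G.indicator h =ᶠ[𝓝 x] h := fun x hx => by
    filter_upwards [hGo.mem_nhds hx] with y hy using indicator_of_mem hy h
  have heq : EqOn (fun x => fderiv ℝ (G.indicator h) x v) (fun x => fderiv ℝ h x v) G :=
    fun x hx => by simp only [(hloc x hx).fderiv_eq]
  rw [← setIntegral_congr_fun hGo.measurableSet heq]
  exact setIntegral_fderiv_apply_eq_zero hGo hGb
    (continuous_indicator_of_continuousOn_closure hc h0) (fun x hx => indicator_of_notMem hx h)
    (fun x hx => (hd x hx).congr_of_eventuallyEq (hloc x hx)) v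
    (hi.congr_fun heq.symm hGo.measurableSet)

end

section

variable {E : Type*} [NormedAddCommGroup E] [InnerProductSpace ℝ E]

theorem fderiv_inner_sub_mul_apply {g : E → ℝ} {x : E} (hg : DifferentiableAt ℝ g x)
    (u x₀ v : E) :
    fderiv ℝ (fun y => ⟪u, y - x₀⟫ * g y) x v = ⟪u, x - x₀⟫ * fderiv ℝ g x v + g x * ⟪u, v⟫ := by
  have hc : HasFDerivAt (fun y => ⟪u, y - x₀⟫) (innerSL ℝ u) x :=
    ((innerSL ℝ u).hasFDerivAt.comp x ((hasFDerivAt_id x).sub_const x₀)).congr_fderiv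
      (by ext; simp)
  rw [fderiv_fun_mul hc.differentiableAt hg, hc.fderiv]
  simp

/-- The divergence of the vector field `x ↦ g x • (x - x₀)`. -/
def radialDivergence (g : E → ℝ) (x₀ x : E) : ℝ :=
  finrank ℝ E * g x + fderiv ℝ g x (x - x₀)

variable [FiniteDimensional ℝ E] [MeasurableSpace E] [BorelSpace E]
  {μ : Measure E} [IsAddHaarMeasure μ] {G : Set E}

theorem integrableOn_radialDivergence_and_setIntegral_eq_zero (hGo : IsOpen G) (hGb : IsBounded G)
    {g : E → ℝ} (hgc : ContinuousOn g (closure G)) (hg0 : ∀ x ∈ frontier G, g x = 0)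
    (hgd : ∀ x ∈ G, DifferentiableAt ℝ g x) (hgi : IntegrableOn g G μ)
    (hg'i : IntegrableOn (fun x => ‖fderiv ℝ g x‖) G μ) (x₀ : E) :
    IntegrableOn (radialDivergence g x₀) G μ ∧ ∫ x in G, radialDivergence g x₀ x ∂μ = 0 := by
  let b := stdOrthonormalBasis ℝ E
  have hGm : MeasurableSet G := hGo.measurableSet
  let h : Fin (finrank ℝ E) → E → ℝ := fun i y => ⟪b i, y - x₀⟫ * g y
  have hterm : ∀ i, ∀ x ∈ G, fderiv ℝ (h i) x (b i) = g x + ⟪b i, x - x₀⟫ * fderiv ℝ g x (b i) :=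
    fun i x hx => by
      rw [fderiv_inner_sub_mul_apply (hgd x hx), real_inner_self_eq_norm_sq, b.orthonormal.1 i]
      ring
  have hsum : EqOn (fun x => ∑ i, fderiv ℝ (h i) x (b i)) (radialDivergence g x₀) G :=
    fun x hx => by
      simp only [radialDivergence, Finset.sum_congr rfl fun i _ => hterm i x hx,
        Finset.sum_add_distrib, Finset.sum_const, Finset.card_univ, Fintype.card_fin, nsmul_eq_mul]
      conv_rhs => rw [← b.sum_repr' (x - x₀), _root_.map_sum]
      simp [map_smul]
  obtain ⟨R, hR⟩ := hGb.subset_closedBall x₀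
  have hint : ∀ i, IntegrableOn (fun x => fderiv ℝ (h i) x (b i)) G μ := fun i => by
    refine (hgi.add ?_).congr_fun (fun x hx => (hterm i x hx).symm) hGm
    refine Integrable.mono' (hg'i.const_mul R)
      (((by fun_prop : Continuous fun x => ⟪b i, x - x₀⟫).aestronglyMeasurable).mul
        (measurable_fderiv_apply_const ℝ g (b i)).aestronglyMeasurable)
      (ae_restrict_of_forall_mem hGm fun x hx => ?_)
    have hx' : ‖x - x₀‖ ≤ R := by simpa [dist_eq_norm] using hR hx
    calc ‖⟪b i, x - x₀⟫ * fderiv ℝ g x (b i)‖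
        ≤ ‖x - x₀‖ * ‖fderiv ℝ g x‖ := by
          rw [norm_mul]
          gcongr
          · simpa [b.orthonormal.1 i] using norm_inner_le_norm (𝕜 := ℝ) (b i) (x - x₀)
          · simpa [b.orthonormal.1 i] using (fderiv ℝ g x).le_opNorm (b i)
      _ ≤ R * ‖fderiv ℝ g x‖ := by gcongr
  refine ⟨IntegrableOn.congr_fun (integrable_finsetSum _ fun i _ => hint i) hsum hGm, ?_⟩
  rw [← setIntegral_congr_fun hGm hsum, integral_finsetSum _ fun i _ => hint i]
  refine Finset.sum_eq_zero fun i _ => setIntegral_fderiv_apply_eq_zero_of_frontier hGo hGb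
    ?_ ?_ ?_ (b i) (hint i)
  · exact ((by fun_prop : Continuous fun y => ⟪b i, y - x₀⟫).continuousOn).mul hgc
  · intro x hx; simp [h, hg0 x hx]
  · exact fun x hx => ((differentiableAt_const _).inner ℝ (differentiableAt_id.sub_const x₀)).mul
      (hgd x hx)

end

def gaussianWeight {E : Type*} [NormedAddCommGroup E] (x₀ : E) (lam : ℝ) (x : E) : ℝ :=
  Real.exp (-‖x - x₀‖ ^ 2 / (4 * lam))

section

variable {E : Type*} [NormedAddCommGroup E] (x₀ : E) (lam : ℝ)

@[fun_prop]
theorem continuous_gaussianWeight : Continuous (gaussianWeight x₀ lam) := by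
  unfold gaussianWeight; fun_prop

variable {lam} in
theorem norm_gaussianWeight_le_one (hlam : 0 ≤ lam) (x : E) : ‖gaussianWeight x₀ lam x‖ ≤ 1 := by
  rw [gaussianWeight, Real.norm_eq_abs, Real.abs_exp, Real.exp_le_one_iff]
  exact div_nonpos_of_nonpos_of_nonneg (neg_nonpos.2 (by positivity)) (by positivity)

variable {x₀ lam} in
theorem integrableOn_sq_mul_gaussianWeight [MeasurableSpace E] [OpensMeasurableSpace E]
    {μ : Measure E} {G : Set E} (hlam : 0 ≤ lam) {h : E → ℝ} (hh : MemLp h 2 (μ.restrict G)) :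
    IntegrableOn (fun x => h x ^ 2 * gaussianWeight x₀ lam x) G μ :=
  hh.integrable_sq.mul_bdd (continuous_gaussianWeight x₀ lam).aestronglyMeasurable
    (ae_of_all _ (norm_gaussianWeight_le_one x₀ hlam))

variable [InnerProductSpace ℝ E]

theorem hasFDerivAt_gaussianWeight (x : E) :
    HasFDerivAt (gaussianWeight x₀ lam)
      ((-gaussianWeight x₀ lam x / (2 * lam)) • innerSL ℝ (x - x₀)) x := by
  have h := ((((hasFDerivAt_id x).sub_const x₀).norm_sq).const_mul (-(4 * lam)⁻¹)).exp
  convert h using 1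
  · funext y
    simp [gaussianWeight, div_eq_inv_mul]
  · ext v
    simp [gaussianWeight, div_eq_inv_mul]
    ring

variable {x₀ lam}

theorem hasFDerivAt_sq_mul_gaussianWeight {f : E → ℝ} {x : E} (hf : DifferentiableAt ℝ f x) :
    HasFDerivAt (fun y => f y ^ 2 * gaussianWeight x₀ lam y)
      (gaussianWeight x₀ lam x •
        ((2 * f x) • fderiv ℝ f x - (f x ^ 2 / (2 * lam)) • innerSL ℝ (x - x₀))) x := by
  refine ((hf.hasFDerivAt.pow 2).fun_mul (hasFDerivAt_gaussianWeight x₀ lam x)).congr_fderiv ?_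
  ext v
  simp
  ring

theorem norm_fderiv_sq_mul_gaussianWeight_le (hlam : 0 < lam) {f : E → ℝ} {x : E}
    (hf : DifferentiableAt ℝ f x) :
    ‖fderiv ℝ (fun y => f y ^ 2 * gaussianWeight x₀ lam y) x‖ ≤
      2 * |f x| * ‖fderiv ℝ f x‖ + f x ^ 2 / (2 * lam) * ‖x - x₀‖ := by
  rw [(hasFDerivAt_sq_mul_gaussianWeight hf).fderiv, norm_smul]
  refine (mul_le_of_le_one_left (norm_nonneg _) (norm_gaussianWeight_le_one x₀ hlam.le x)).trans ?_
  refine (norm_sub_le _ _).trans_eq ?_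
  rw [norm_smul, norm_smul, innerSL_apply_norm, Real.norm_eq_abs, Real.norm_eq_abs,
    abs_mul, abs_two, abs_of_nonneg (by positivity : 0 ≤ f x ^ 2 / (2 * lam))]

variable [CompleteSpace E]

theorem fderiv_sq_mul_gaussianWeight_apply_sub_le (hlam : 0 < lam) {f : E → ℝ} {x : E}
    (hf : DifferentiableAt ℝ f x) :
    fderiv ℝ (fun y => f y ^ 2 * gaussianWeight x₀ lam y) x (x - x₀) ≤
      (4 * lam * ‖gradient f x‖ ^ 2 - ‖x - x₀‖ ^ 2 / (4 * lam) * f x ^ 2) *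
        gaussianWeight x₀ lam x := by
  have hw : 0 ≤ gaussianWeight x₀ lam x := (Real.exp_pos _).le
  have hcs : f x * fderiv ℝ f x (x - x₀) ≤ |f x| * ‖x - x₀‖ * ‖gradient f x‖ := by
    rw [← InnerProductSpace.toDual_symm_apply (𝕜 := ℝ), ← gradient, mul_assoc, mul_comm ‖x - x₀‖]
    exact (le_abs_self _).trans (by rw [abs_mul]; gcongr; exact abs_real_inner_le_norm _ _)
  have hamgm : 2 * (|f x| * ‖x - x₀‖ * ‖gradient f x‖) ≤
      4 * lam * ‖gradient f x‖ ^ 2 + ‖x - x₀‖ ^ 2 / (4 * lam) * f x ^ 2 := by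
    have hsq : (|f x| * ‖x - x₀‖ - 4 * lam * ‖gradient f x‖) ^ 2 / (4 * lam) =
        4 * lam * ‖gradient f x‖ ^ 2 + ‖x - x₀‖ ^ 2 / (4 * lam) * f x ^ 2 -
          2 * (|f x| * ‖x - x₀‖ * ‖gradient f x‖) := by
      field_simp
      rw [← sq_abs (f x)]
      ring
    linarith [div_nonneg (sq_nonneg (|f x| * ‖x - x₀‖ - 4 * lam * ‖gradient f x‖))
      (by positivity : (0 : ℝ) ≤ 4 * lam)]
  rw [(hasFDerivAt_sq_mul_gaussianWeight hf).fderiv]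
  simp only [_root_.smul_apply, _root_.sub_apply, innerSL_apply_apply, real_inner_self_eq_norm_sq,
    smul_eq_mul]
  rw [mul_comm]
  refine mul_le_mul_of_nonneg_right ?_ hw
  have : f x ^ 2 / (2 * lam) * ‖x - x₀‖ ^ 2 = 2 * (‖x - x₀‖ ^ 2 / (4 * lam) * f x ^ 2) := by
    field_simp; ring
  linarith

theorem integrableOn_norm_fderiv_sq_mul_gaussianWeight [MeasurableSpace E] [OpensMeasurableSpace E]
    {μ : Measure E} {G : Set E} (hG : MeasurableSet G) (hGb : IsBounded G) (hlam : 0 < lam)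
    {f : E → ℝ} (hfd : ∀ x ∈ G, DifferentiableAt ℝ f x) (hf : MemLp f 2 (μ.restrict G))
    (hf' : MemLp (fun x => ‖gradient f x‖) 2 (μ.restrict G)) :
    IntegrableOn (fun x => ‖fderiv ℝ (fun y => f y ^ 2 * gaussianWeight x₀ lam y) x‖) G μ := by
  obtain ⟨R, hR⟩ := hGb.subset_closedBall x₀
  refine Integrable.mono' ((hf.integrable_sq.add hf'.integrable_sq).const_mul (1 + R / (2 * lam)))
    (measurable_fderiv ℝ _).norm.aestronglyMeasurable
    (ae_restrict_of_forall_mem hG fun x hx => ?_)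
  have hxR : ‖x - x₀‖ ≤ R := by simpa [dist_eq_norm] using hR hx
  have hgrad : ‖fderiv ℝ f x‖ = ‖gradient f x‖ := by rw [gradient, LinearIsometryEquiv.norm_map]
  have h2 : 2 * |f x| * ‖gradient f x‖ ≤ f x ^ 2 + ‖gradient f x‖ ^ 2 := by
    simpa [sq_abs] using two_mul_le_add_sq |f x| ‖gradient f x‖
  have h3 : f x ^ 2 / (2 * lam) * ‖x - x₀‖ ≤ R / (2 * lam) * (f x ^ 2 + ‖gradient f x‖ ^ 2) := by
    have hR0 : 0 ≤ R := (norm_nonneg _).trans hxR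
    calc f x ^ 2 / (2 * lam) * ‖x - x₀‖ ≤ f x ^ 2 / (2 * lam) * R := by gcongr
      _ = R / (2 * lam) * f x ^ 2 := by ring
      _ ≤ R / (2 * lam) * (f x ^ 2 + ‖gradient f x‖ ^ 2) := by
        gcongr
        exact le_add_of_nonneg_right (sq_nonneg _)
  rw [Real.norm_eq_abs, abs_norm]
  refine (norm_fderiv_sq_mul_gaussianWeight_le hlam (hfd x hx)).trans ?_
  rw [hgrad, Pi.add_apply]
  linarith

variable [FiniteDimensional ℝ E] [MeasurableSpace E] [BorelSpace E]
  {μ : Measure E} [IsAddHaarMeasure μ] {G : Set E}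

theorem setIntegral_norm_sub_sq_mul_gaussianWeight_le (hGo : IsOpen G) (hGb : IsBounded G)
    {f : E → ℝ} (hfc : ContinuousOn f (closure G)) (hfd : ∀ x ∈ G, DifferentiableAt ℝ f x)
    (hfz : ∀ x ∈ frontier G, f x = 0) (hf : MemLp f 2 (μ.restrict G))
    (hf' : MemLp (fun x => ‖gradient f x‖) 2 (μ.restrict G)) (hlam : 0 < lam) :
    ∫ x in G, ‖x - x₀‖ ^ 2 / (8 * lam) * f x ^ 2 * gaussianWeight x₀ lam x ∂μ ≤
      2 * lam * ∫ x in G, ‖gradient f x‖ ^ 2 * gaussianWeight x₀ lam x ∂μ +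
        finrank ℝ E / 2 * ∫ x in G, f x ^ 2 * gaussianWeight x₀ lam x ∂μ := by
  have hGm : MeasurableSet G := hGo.measurableSet
  set w := gaussianWeight x₀ lam
  set g := fun y => f y ^ 2 * w y
  have hB : IntegrableOn (fun x => f x ^ 2 * w x) G μ :=
    integrableOn_sq_mul_gaussianWeight hlam.le hf
  have hA : IntegrableOn (fun x => ‖gradient f x‖ ^ 2 * w x) G μ :=
    integrableOn_sq_mul_gaussianWeight hlam.le hf'
  have hL : IntegrableOn (fun x => ‖x - x₀‖ ^ 2 / (8 * lam) * f x ^ 2 * w x) G μ := by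
    obtain ⟨R, hR⟩ := hGb.subset_closedBall x₀
    simp only [mul_assoc]
    refine hB.bdd_mul (c := R ^ 2 / (8 * lam)) (by fun_prop : Continuous fun x : E =>
      ‖x - x₀‖ ^ 2 / (8 * lam)).aestronglyMeasurable (ae_restrict_of_forall_mem hGm fun x hx => ?_)
    have hxR : ‖x - x₀‖ ≤ R := by simpa [dist_eq_norm] using hR hx
    rw [Real.norm_eq_abs, abs_of_nonneg (by positivity)]
    gcongr
  obtain ⟨hDi, hD0⟩ := integrableOn_radialDivergence_and_setIntegral_eq_zero hGo hGb (g := g)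
    ((hfc.pow 2).mul (continuous_gaussianWeight x₀ lam).continuousOn)
    (fun x hx => by simp [g, hfz x hx])
    (fun x hx => ((hfd x hx).pow 2).mul (hasFDerivAt_gaussianWeight x₀ lam x).differentiableAt)
    hB (integrableOn_norm_fderiv_sq_mul_gaussianWeight hGm hGb hlam hfd hf hf') x₀
  have hAB : IntegrableOn (fun x => 2 * lam * (‖gradient f x‖ ^ 2 * w x) +
      finrank ℝ E / 2 * (f x ^ 2 * w x)) G μ := (hA.const_mul _).add (hB.const_mul _)
  have hD2 : IntegrableOn (fun x => radialDivergence g x₀ x / 2) G μ := hDi.div_const 2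
  have hpt : ∀ x ∈ G, ‖x - x₀‖ ^ 2 / (8 * lam) * f x ^ 2 * w x ≤
      2 * lam * (‖gradient f x‖ ^ 2 * w x) + finrank ℝ E / 2 * (f x ^ 2 * w x) -
        radialDivergence g x₀ x / 2 := fun x hx => by
    have := fderiv_sq_mul_gaussianWeight_apply_sub_le hlam (hfd x hx) (x₀ := x₀)
    have e : ‖x - x₀‖ ^ 2 / (8 * lam) = ‖x - x₀‖ ^ 2 / (4 * lam) / 2 := by ring
    rw [radialDivergence, e]
    linarith
  calc ∫ x in G, ‖x - x₀‖ ^ 2 / (8 * lam) * f x ^ 2 * w x ∂μ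
      ≤ ∫ x in G, (2 * lam * (‖gradient f x‖ ^ 2 * w x) + finrank ℝ E / 2 * (f x ^ 2 * w x) -
          radialDivergence g x₀ x / 2) ∂μ := setIntegral_mono_on hL (hAB.sub hD2) hGm hpt
    _ = _ := by
      rw [integral_sub hAB hD2, integral_add (hA.const_mul _) (hB.const_mul _),
        integral_const_mul, integral_const_mul, integral_div, hD0, zero_div, sub_zero]

end

theorem gaussian_hardy_inequality_general
    {n : ℕ} (G : Set (Euc n))
    (hGo : IsOpen G) (hGb : Bornology.IsBounded G)
    (x₀ : Euc n) :
    ∀ f : Euc n → ℝ,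
      -- `f ∈ H₀¹(G)` (classical encoding)
      ContinuousOn f (closure G) →
      (∀ x ∈ G, DifferentiableAt ℝ f x) →
      (∀ x ∈ frontier G, f x = 0) →
      MemLp f 2 (volume.restrict G) →
      MemLp (fun x => ‖gradient f x‖) 2 (volume.restrict G) →
      ∀ lam > (0:ℝ),
        (∫ x in G,
            (‖x - x₀‖ ^ 2 / (8 * lam)) * |f x| ^ 2 * Real.exp (-‖x - x₀‖ ^ 2 / (4 * lam)))
          ≤ 2 * lam * (∫ x in G, ‖gradient f x‖ ^ 2 * Real.exp (-‖x - x₀‖ ^ 2 / (4 * lam)))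
            + ((n:ℝ) / 2) *
              (∫ x in G, |f x| ^ 2 * Real.exp (-‖x - x₀‖ ^ 2 / (4 * lam))) := by
  intro f hfc hfd hfz hf2 hg2 lam hlam
  simpa only [sq_abs, gaussianWeight, finrank_euclideanSpace_fin] using
    setIntegral_norm_sub_sq_mul_gaussianWeight_le hGo hGb hfc hfd hfz hf2 hg2 hlam

/-- Lemma 3.3: Gaussian-weighted Hardy-type inequality: for every
`f ∈ H₀¹(G)` and `λ > 0`,
`∫_G (|x−x₀|²/(8λ))|f|²e^{−|x−x₀|²/(4λ)} ≤ 2λ∫_G |∇f|²e^{−|x−x₀|²/(4λ)}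
  + (n/2)∫_G |f|²e^{−|x−x₀|²/(4λ)}`. -/
theorem gaussian_hardy_inequality
    {n : ℕ} (hn : 1 ≤ n) (G : Set (Euc n))
    (hGo : IsOpen G) (hGb : Bornology.IsBounded G) (hGc : IsConnected G)
    (x₀ : Euc n) (hx₀ : x₀ ∈ G) :
    ∀ f : Euc n → ℝ,
      -- `f ∈ H₀¹(G)` (classical encoding)
      ContinuousOn f (closure G) →
      (∀ x ∈ G, DifferentiableAt ℝ f x) →
      (∀ x ∈ frontier G, f x = 0) →
      MemLp f 2 (volume.restrict G) →
      MemLp (fun x => ‖gradient f x‖) 2 (volume.restrict G) →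
      ∀ lam > (0:ℝ),
        (∫ x in G,
            (‖x - x₀‖ ^ 2 / (8 * lam)) * |f x| ^ 2 * Real.exp (-‖x - x₀‖ ^ 2 / (4 * lam)))
          ≤ 2 * lam * (∫ x in G, ‖gradient f x‖ ^ 2 * Real.exp (-‖x - x₀‖ ^ 2 / (4 * lam)))
            + ((n:ℝ) / 2) *
              (∫ x in G, |f x| ^ 2 * Real.exp (-‖x - x₀‖ ^ 2 / (4 * lam))) :=
  gaussian_hardy_inequality_general G hGo hGb x₀
end
end
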